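/- (Barlow–Ding–Nachmias–Peres lemma) Let A be a finite subset of M, let z ∈ A, and let k be a positive integer. Then E_z T_cov(A) ≤ E_z T^k(z) / P_z( T_cov(A) ≤ T^k(z) ) = k / ( π(z) · P_z( T_cov(A) ≤ T^k(z) ) ). -/

import Mathlib

open MeasureTheory ENNReal NNReal

namespace CoverTime

noncomputable section

/-- A (time-homogeneous) Markov chain on a state space `M`, described by the family of
laws `P x` of the trajectory `(X_n)_{n ≥ 0}` started at `x`, on the path space `ℕ → M`,
together with its transition kernel `K`. -/
structure Chain (M : Type*) [MeasurableSpace M] where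
  P : M → Measure (ℕ → M)
  prob : ∀ x, IsProbabilityMeasure (P x)
  K : M → M → ℝ≥0∞
  K_row : ∀ x, ∑' y, K x y = 1
  start : ∀ x, P x {ω | ω 0 = x} = 1
  markov : ∀ (x : M) (path : ℕ → M) (n : ℕ),
    P x {ω | ∀ i ≤ n + 1, ω i = path i}
      = P x {ω | ∀ i ≤ n, ω i = path i} * K (path n) (path (n + 1))

variable {M : Type*}

/-- Hitting time `T(A) = inf {n ≥ 0 : X_n ∈ A}` of a set `A`, with value `∞` if `A` is
never hit. -/
def hitTime (A : Set M) (ω : ℕ → M) : ℝ≥0∞ :=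
  ⨅ n ∈ {n : ℕ | ω n ∈ A}, (n : ℝ≥0∞)

/-- The `k`-th return time `T^k(x)`: `T^0(x) = 0` and
`T^k(x) = inf {n ≥ T^{k-1}(x) + 1 : X_n = x}`. -/
def retTime (x : M) : ℕ → (ℕ → M) → ℝ≥0∞
  | 0 => fun _ => 0
  | k + 1 => fun ω => ⨅ n ∈ {n : ℕ | retTime x k ω < (n : ℝ≥0∞) ∧ ω n = x}, (n : ℝ≥0∞)

/-- Number of visits to `y` (strictly) before time `t`, i.e. `N_t(y)`. -/
def visits (y : M) (t : ℝ≥0∞) (ω : ℕ → M) : ℝ≥0∞ :=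
  ∑' n : ℕ, Set.indicator {n : ℕ | (n : ℝ≥0∞) < t ∧ ω n = y} (fun _ => (1 : ℝ≥0∞)) n

variable [MeasurableSpace M]

/-- Expectation `E_x f` of a nonnegative path functional under `P_x`. -/
def E (c : Chain M) (x : M) (f : (ℕ → M) → ℝ≥0∞) : ℝ≥0∞ :=
  ∫⁻ ω, f ω ∂(c.P x)

/-- The expected hitting time `E_x T(y)`. -/
def eHit (c : Chain M) (x y : M) : ℝ≥0∞ := E c x (hitTime {y})

/-- The commute distance `d(x,y) = E_x T(y) + E_y T(x)`. -/
def commuteDist (c : Chain M) (x y : M) : ℝ≥0∞ := eHit c x y + eHit c y x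

/-- `T_cov(A) = sup_{x ∈ A} T(x)`, the first time every point of `A` has been visited. -/
def coverTime (A : Set M) (ω : ℕ → M) : ℝ≥0∞ := ⨆ x ∈ A, hitTime {x} ω

/-- The cover time `cov(A) = sup_{x ∈ A} E_x T_cov(A)`. -/
def cov (c : Chain M) (A : Set M) : ℝ≥0∞ := ⨆ x ∈ A, E c x (coverTime A)

/-- `cov_-(A) = min_{x ∈ A} E_x T_cov(A)`. -/
def covMinus (c : Chain M) (A : Set M) : ℝ≥0∞ := ⨅ x ∈ A, E c x (coverTime A)

/-- Irreducibility of the chain. -/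
def Irreducible (c : Chain M) : Prop := ∀ x y : M, ∃ n : ℕ, 0 < c.P x {ω | ω n = y}

/-- Positive recurrence: every state has finite expected return time. -/
def PositiveRecurrent (c : Chain M) : Prop := ∀ x : M, E c x (retTime x 1) < ∞

/-- `π` is an invariant probability measure for the chain. -/
def Invariant (c : Chain M) (π : M → ℝ≥0∞) : Prop :=
  (∑' x, π x = 1) ∧ ∀ y, ∑' x, π x * c.K x y = π y

/-- Reversibility with respect to `π`: `π(x) P(x,y) = π(y) P(y,x)`. -/
def Reversible (c : Chain M) (π : M → ℝ≥0∞) : Prop :=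
  ∀ x y, π x * c.K x y = π y * c.K y x

/-- Diameter of a set with respect to an `ℝ≥0∞`-valued distance. -/
def setDiam (d : M → M → ℝ≥0∞) (B : Set M) : ℝ≥0∞ := ⨆ x ∈ B, ⨆ y ∈ B, d x y

/-- The sequence `N_0 = 1`, `N_n = 2^(2^n)` for `n ≥ 1`. -/
def Nseq : ℕ → ℕ
  | 0 => 1
  | n + 1 => 2 ^ 2 ^ (n + 1)

/-- An admissible sequence of partitions of `A`: `𝒜_{n+1}` refines `𝒜_n` and
`|𝒜_n| ≤ N_n` for every `n`.  The partition `𝒜_n` is encoded by the map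
`cell n` sending `x ∈ A` to the element `A_n(x)` of `𝒜_n` containing it. -/
structure AdmissibleSeq {M : Type*} (A : Set M) where
  cell : ℕ → M → Set M
  self_mem : ∀ n, ∀ x ∈ A, x ∈ cell n x
  cell_subset : ∀ n, ∀ x ∈ A, cell n x ⊆ A
  compatible : ∀ n, ∀ x ∈ A, ∀ y ∈ A, cell n x = cell n y ∨ Disjoint (cell n x) (cell n y)
  refines : ∀ n, ∀ x ∈ A, cell (n + 1) x ⊆ cell n x
  finite : ∀ n, {B : Set M | ∃ x ∈ A, B = cell n x}.Finite
  card_le : ∀ n, {B : Set M | ∃ x ∈ A, B = cell n x}.ncard ≤ Nseq n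

/-- Talagrand's functional `γ₂(A, d) = inf sup_x Σ_n 2^{n/2} Δ(A_n(x), d)`, the infimum
running over admissible sequences of partitions of `A`. -/
def gamma2 {M : Type*} (d : M → M → ℝ≥0∞) (A : Set M) : ℝ≥0∞ :=
  ⨅ 𝒜 : AdmissibleSeq A, ⨆ x ∈ A,
    ∑' n : ℕ, (2 : ℝ≥0∞) ^ ((n : ℝ) / 2) * setDiam d (𝒜.cell n x)

/-- Talagrand's functional `γ₁(A, d) = inf sup_x Σ_n 2^n Δ(A_n(x), d)`. -/
def gamma1 {M : Type*} (d : M → M → ℝ≥0∞) (A : Set M) : ℝ≥0∞ :=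
  ⨅ 𝒜 : AdmissibleSeq A, ⨆ x ∈ A,
    ∑' n : ℕ, (2 : ℝ≥0∞) ^ n * setDiam d (𝒜.cell n x)

/-- Talagrand's growth condition for a set functional `F`, with parameters `r` and `τ`. -/
def GrowthCondition {M : Type*} (d : M → M → ℝ≥0∞) (F : Set M → ℝ≥0∞)
    (r : ℝ≥0∞) (τ : ℕ) : Prop :=
  ∀ (n : ℕ) (a : ℝ≥0∞), 0 < a →
    ∀ H : Fin (Nseq (n + τ)) → Set M,
      (∀ i, (H i).Nonempty) →
      setDiam d (⋃ i, H i) ≤ r * a →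
      (∀ i j, i ≠ j → ∀ x ∈ H i, ∀ y ∈ H j, a ≤ d x y) →
      (∀ i, setDiam d (H i) ≤ a / r) →
      a * 2 ^ n + ⨅ i, F (H i) ≤ F (⋃ i, H i)


/-!
Cut the trajectory from `z` into blocks of `k` successive returns to `z`. By the strong Markov
property at the return times, each block is a fresh copy of the path up to `T^k(z)`, so `A` is
still uncovered after `m` blocks with probability at most `q ^ m`, where
`q = P_z(T_cov(A) > T^k(z))`. Summing the expected lengths of the blocks that start before `A` is
covered gives `E_z T_cov(A) ≤ Σ_m q ^ m E_z T^k(z) = E_z T^k(z) / P_z(T_cov(A) ≤ T^k(z))`.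

The identity is `E_z T^k(z) = k E_z T^1(z)` combined with Kac's formula `π(z) E_z T^1(z) = 1`,
obtained by a renewal argument for the stationary chain `Σ_x π(x) P_x`.

Since `Chain` only constrains `P x` on measurable sets of paths, we first show that positive
recurrence forces the singletons of `M` to be measurable.
-/

def firstTime (p : ℕ → Prop) : ℝ≥0∞ := ⨅ n ∈ {n | p n}, (n : ℝ≥0∞)

section FirstTime

variable {p : ℕ → Prop}

lemma firstTime_le {n : ℕ} (hn : p n) : firstTime p ≤ n := iInf₂_le n hn

lemma le_firstTime {a : ℝ≥0∞} (h : ∀ n, p n → a ≤ n) : a ≤ firstTime p := le_iInf₂ h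

lemma firstTime_eq_find [DecidablePred p] (h : ∃ n, p n) : firstTime p = Nat.find h :=
  le_antisymm (firstTime_le (Nat.find_spec h))
    (le_firstTime fun _ hn => by exact_mod_cast Nat.find_min' h hn)

lemma firstTime_eq_top (h : ∀ n, ¬ p n) : firstTime p = ⊤ :=
  top_le_iff.mp (le_firstTime fun n hn => (h n hn).elim)

lemma firstTime_eq_top_iff : firstTime p = ⊤ ↔ ∀ n, ¬ p n :=
  ⟨fun h n hn => ENNReal.natCast_ne_top n (top_le_iff.mp (h ▸ firstTime_le hn)),
    firstTime_eq_top⟩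

lemma firstTime_eq_natCast_or_top (p : ℕ → Prop) :
    (∃ n : ℕ, firstTime p = n) ∨ firstTime p = ⊤ := by
  classical
  by_cases h : ∃ n, p n
  · exact Or.inl ⟨_, firstTime_eq_find h⟩
  · exact Or.inr (firstTime_eq_top (not_exists.mp h))

lemma natCast_lt_firstTime_iff {n : ℕ} :
    (n : ℝ≥0∞) < firstTime p ↔ ∀ m ≤ n, ¬ p m := by
  classical
  by_cases h : ∃ n, p n
  · rw [firstTime_eq_find h, Nat.cast_lt, Nat.lt_find_iff]
  · simp_all [firstTime_eq_top]

lemma firstTime_eq_natCast_iff {n : ℕ} : firstTime p = n ↔ p n ∧ ∀ m < n, ¬ p m := by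
  classical
  by_cases h : ∃ n, p n
  · rw [firstTime_eq_find h, Nat.cast_inj, Nat.find_eq_iff]
  · simp_all [firstTime_eq_top]

lemma firstTime_eq_iInf [DecidablePred p] :
    firstTime p = ⨅ n : ℕ, if p n then (n : ℝ≥0∞) else ⊤ := by
  simp only [firstTime, Set.mem_ofPred_eq, iInf_eq_if]

lemma firstTime_shift (a : ℕ) (t : ℝ≥0∞) :
    firstTime (fun m => (a : ℝ≥0∞) + t < m ∧ p m)
      = a + firstTime (fun i => t < i ∧ p (a + i)) := by
  refine le_antisymm ?_ (le_firstTime fun m ⟨hm, hpm⟩ => ?_)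
  · simp only [firstTime, ENNReal.add_iInf]
    refine le_iInf₂ fun i ⟨hi, hpi⟩ => ?_
    have : firstTime (fun m => (a : ℝ≥0∞) + t < m ∧ p m) ≤ ((a + i : ℕ) : ℝ≥0∞) :=
      firstTime_le ⟨by push_cast; gcongr; simp, hpi⟩
    exact_mod_cast this
  · obtain ⟨i, rfl⟩ : ∃ i, m = a + i :=
      Nat.exists_eq_add_of_le (by exact_mod_cast le_self_add.trans hm.le)
    push_cast at hm ⊢
    gcongr
    exact firstTime_le ⟨(ENNReal.add_lt_add_iff_left (by simp)).mp hm, hpm⟩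

end FirstTime

section Paths

variable {M : Type*}

def shift (n : ℕ) (ω : ℕ → M) : ℕ → M := fun i => ω (n + i)

@[simp] lemma shift_apply (n : ℕ) (ω : ℕ → M) (i : ℕ) : shift n ω i = ω (n + i) := rfl

lemma measurable_shift [MeasurableSpace M] (n : ℕ) : Measurable (shift (M := M) n) :=
  measurable_pi_lambda _ fun i => measurable_pi_apply (n + i)

/-- On `{τ = ⊤}` this is the junk value `shiftAt τ ω = ω`. -/
def shiftAt (τ : (ℕ → M) → ℝ≥0∞) (ω : ℕ → M) : ℕ → M :=
  shift ⌊(τ ω).toNNReal⌋₊ ω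

lemma shiftAt_of_eq {τ : (ℕ → M) → ℝ≥0∞} {ω : ℕ → M} {n : ℕ} (h : τ ω = n) :
    shiftAt τ ω = shift n ω := by
  simp [shiftAt, h]

lemma measurable_shiftAt [MeasurableSpace M] {τ : (ℕ → M) → ℝ≥0∞}
    (hτ : Measurable τ) :
    Measurable (shiftAt τ) := by
  have hN : Measurable fun ω => ⌊(τ ω).toNNReal⌋₊ :=
    Nat.measurable_floor.comp (measurable_toNNReal.comp hτ)
  have hpair : Measurable fun p : (ℕ → M) × ℕ => shift p.2 p.1 :=
    measurable_from_prod_countable_left fun n => measurable_shift n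
  exact hpair.comp (measurable_id.prodMk hN)

lemma hitTime_singleton (x : M) (ω : ℕ → M) :
    hitTime {x} ω = firstTime (fun n => ω n = x) := rfl

lemma retTime_succ (z : M) (k : ℕ) (ω : ℕ → M) :
    retTime z (k + 1) ω = firstTime (fun n => retTime z k ω < n ∧ ω n = z) := rfl

lemma retTime_eq_natCast_or_top (z : M) (k : ℕ) (ω : ℕ → M) :
    (∃ n : ℕ, retTime z k ω = n) ∨ retTime z k ω = ⊤ := by
  cases k with
  | zero => exact Or.inl ⟨0, by simp [retTime]⟩
  | succ k => exact firstTime_eq_natCast_or_top _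

lemma retTime_le_succ (z : M) (k : ℕ) (ω : ℕ → M) :
    retTime z k ω ≤ retTime z (k + 1) ω :=
  le_firstTime fun _ hn => hn.1.le

lemma retTime_mono (z : M) (ω : ℕ → M) : Monotone fun k => retTime z k ω :=
  monotone_nat_of_le_succ fun k => retTime_le_succ z k ω

lemma natCast_le_retTime (z : M) (k : ℕ) (ω : ℕ → M) :
    (k : ℝ≥0∞) ≤ retTime z k ω := by
  induction k with
  | zero => simp
  | succ k ih =>
    refine le_firstTime fun n hn => ?_
    have : k < n := by exact_mod_cast ih.trans_lt hn.1
    exact_mod_cast this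

lemma apply_eq_of_retTime_eq {z : M} {k n : ℕ} {ω : ℕ → M} (hk : 1 ≤ k)
    (h : retTime z k ω = n) : ω n = z := by
  obtain ⟨k, rfl⟩ := Nat.exists_eq_add_of_le' hk
  exact (firstTime_eq_natCast_iff.mp h).1.2

lemma retTime_add (z : M) (j k : ℕ) (ω : ℕ → M) :
    retTime z (j + k) ω = retTime z j ω + retTime z k (shiftAt (retTime z j) ω) := by
  obtain ⟨a, ha⟩ | htop := retTime_eq_natCast_or_top z j ω
  · rw [shiftAt_of_eq ha, ha]
    induction k with
    | zero => simpa [retTime] using ha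
    | succ k ih =>
      rw [← add_assoc, retTime_succ, ih, firstTime_shift, retTime_succ]
      rfl
  · rw [htop, top_add, ← top_le_iff, ← htop]
    exact retTime_mono z ω (Nat.le_add_right j k)

lemma retTime_eq_of_eqOn {z : M} (j : ℕ) {n : ℕ} {ω ω' : ℕ → M}
    (hω : ∀ i ≤ n, ω i = ω' i) (h : retTime z j ω = n) : retTime z j ω' = n := by
  induction j generalizing n with
  | zero => exact h
  | succ j ih =>
    obtain ⟨⟨hlt, hz⟩, hmin⟩ := firstTime_eq_natCast_iff.mp h
    obtain ⟨m, hm⟩ | htop := retTime_eq_natCast_or_top z j ω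
    swap
    · simp [htop] at hlt
    rw [hm, Nat.cast_lt] at hlt
    have hm' : retTime z j ω' = m := ih (fun i hi => hω i (by omega)) hm
    refine firstTime_eq_natCast_iff.mpr
      ⟨⟨by rw [hm']; exact_mod_cast hlt, hω n le_rfl ▸ hz⟩, ?_⟩
    rintro i hi ⟨hmi, hzi⟩
    exact hmin i hi ⟨hm ▸ hm' ▸ hmi, (hω i hi.le).symm ▸ hzi⟩

lemma natCast_lt_hitTime_iff {x : M} {ω : ℕ → M} {n : ℕ} :
    (n : ℝ≥0∞) < hitTime {x} ω ↔ ∀ i ≤ n, ω i ≠ x :=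
  natCast_lt_firstTime_iff

lemma natCast_lt_retTime_one_iff {z : M} {ω : ℕ → M} {n : ℕ} :
    (n : ℝ≥0∞) < retTime z 1 ω ↔ ∀ i, 1 ≤ i → i ≤ n → ω i ≠ z := by
  rw [retTime_succ, natCast_lt_firstTime_iff]
  change (∀ m : ℕ, m ≤ n → ¬((0 : ℝ≥0∞) < m ∧ ω m = z)) ↔ _
  simp only [Nat.cast_pos, not_and]
  exact forall_congr' fun i => ⟨fun h h1 hi => h hi h1, fun h hi h1 => h h1 hi⟩

lemma retTime_one_eq_top_iff {z : M} {ω : ℕ → M} :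
    retTime z 1 ω = ⊤ ↔ ∀ i, 1 ≤ i → ω i ≠ z := by
  rw [retTime_succ, firstTime_eq_top_iff]
  change (∀ m : ℕ, ¬((0 : ℝ≥0∞) < m ∧ ω m = z)) ↔ _
  simp only [Nat.cast_pos, not_and]
  rfl

lemma hitTime_le_add_shift (x : M) (ω : ℕ → M) (n : ℕ) :
    hitTime {x} ω ≤ n + hitTime {x} (shift n ω) := by
  simp only [hitTime, ENNReal.add_iInf]
  refine le_iInf₂ fun i hi => ?_
  exact_mod_cast iInf₂_le
    (f := fun m (_ : m ∈ {m | ω m ∈ ({x} : Set M)}) => (m : ℝ≥0∞)) (n + i) hi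

lemma coverTime_le_add_shift (A : Set M) (ω : ℕ → M) (n : ℕ) :
    coverTime A ω ≤ n + coverTime A (shift n ω) :=
  iSup₂_le fun x hx => (hitTime_le_add_shift x ω n).trans
    (add_le_add_right (le_iSup₂ (f := fun x (_ : x ∈ A) => hitTime {x} (shift n ω)) x hx) _)

lemma natCast_lt_coverTime_iff {A : Set M} {ω : ℕ → M} {n : ℕ} :
    (n : ℝ≥0∞) < coverTime A ω ↔ ∃ x ∈ A, ∀ m ≤ n, ω m ≠ x := by
  simp only [coverTime, lt_iSup_iff, hitTime_singleton, natCast_lt_firstTime_iff, exists_prop]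

/-- The `m`-th block of `k` returns to `z` has length `T^k ∘ θ_{T^{mk}}`; the cover time is at
most the total length of the blocks that start before `A` is covered. -/
lemma coverTime_le_tsum_blocks {k : ℕ} (hk : 1 ≤ k) (A : Set M) (z : M) (ω : ℕ → M) :
    coverTime A ω ≤ ∑' m : ℕ, {ω | retTime z (m * k) ω < coverTime A ω}.indicator
      (fun ω => retTime z k (shiftAt (retTime z (m * k)) ω)) ω := by
  set block : ℕ → ℝ≥0∞ := fun m => {ω | retTime z (m * k) ω < coverTime A ω}.indicator
    (fun ω => retTime z k (shiftAt (retTime z (m * k)) ω)) ω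
  have hpartial (N : ℕ) :
      min (coverTime A ω) (retTime z (N * k) ω) ≤ ∑ m ∈ Finset.range N, block m := by
    induction N with
    | zero => simp [retTime]
    | succ N ih =>
      rw [Finset.sum_range_succ]
      by_cases hN : retTime z (N * k) ω < coverTime A ω
      · calc min (coverTime A ω) (retTime z ((N + 1) * k) ω)
            ≤ retTime z (N * k) ω + retTime z k (shiftAt (retTime z (N * k)) ω) := by
              rw [← retTime_add, ← Nat.succ_mul]
              exact min_le_right _ _
          _ ≤ _ := add_le_add ((min_eq_right hN.le).symm.le.trans ih)
              (Set.indicator_of_mem (s := {ω | retTime z (N * k) ω < coverTime A ω}) hN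
                (fun ω => retTime z k (shiftAt (retTime z (N * k)) ω))).ge
      · exact (min_le_left _ _).trans
          ((min_eq_left (not_lt.mp hN)).symm.le.trans (ih.trans le_self_add))
  by_cases hcov : ∃ N, coverTime A ω ≤ retTime z (N * k) ω
  · obtain ⟨N, hN⟩ := hcov
    exact (min_eq_left hN).symm.le.trans ((hpartial N).trans (ENNReal.sum_le_tsum _))
  · simp only [not_exists, not_le] at hcov
    refine le_top.trans ?_
    rw [← ENNReal.iSup_natCast]
    refine iSup_le fun N => ?_
    calc (N : ℝ≥0∞) ≤ ((N * k : ℕ) : ℝ≥0∞) := by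
          exact_mod_cast Nat.le_mul_of_pos_right N hk
      _ ≤ retTime z (N * k) ω := natCast_le_retTime z _ ω
      _ = min (coverTime A ω) (retTime z (N * k) ω) := (min_eq_right (hcov N).le).symm
      _ ≤ _ := (hpartial N).trans (ENNReal.sum_le_tsum _)

end Paths

section Cylinders

variable {M : Type*}

def cyl (q : ℕ → M) (n : ℕ) : Set (ℕ → M) := {ω | ∀ i ≤ n, ω i = q i}

def extendWord {n : ℕ} (v : Fin (n + 1) → M) : ℕ → M := fun j => v (Fin.clamp j n)

lemma extendWord_apply {n : ℕ} (v : Fin (n + 1) → M) {j : ℕ} (hj : j ≤ n) :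
    extendWord v j = v ⟨j, Nat.lt_succ_of_le hj⟩ := by
  simp [extendWord, Fin.clamp, Nat.min_eq_left hj]

lemma mem_cyl_extendWord {n : ℕ} (ω : ℕ → M) :
    ω ∈ cyl (extendWord fun i : Fin (n + 1) => ω i) n :=
  fun _ hi => (extendWord_apply (fun i : Fin (n + 1) => ω i) hi).symm

lemma cyl_zero (q : ℕ → M) : cyl q 0 = {ω | ω 0 = q 0} := by
  simp [cyl]

lemma cyl_congr {q q' : ℕ → M} {n : ℕ} (h : ∀ i ≤ n, q i = q' i) :
    cyl q n = cyl q' n := by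
  ext ω
  exact forall₂_congr fun i hi => by rw [h i hi]

lemma cyl_subset_cyl {q q' : ℕ → M} {n n' : ℕ} (h : n' ≤ n) (hq : q ∈ cyl q' n') :
    cyl q n ⊆ cyl q' n' :=
  fun _ hω i hi => (hω i (hi.trans h)).trans (hq i hi)

lemma disjoint_cyl_extendWord {n : ℕ} {v w : Fin (n + 1) → M} (h : v ≠ w) :
    Disjoint (cyl (extendWord v) n) (cyl (extendWord w) n) := by
  refine Set.disjoint_left.mpr fun ω hv hw => h (funext fun i => ?_)
  have := (hv i (Nat.le_of_lt_succ i.2)).symm.trans (hw i (Nat.le_of_lt_succ i.2))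
  rwa [extendWord_apply _ (Nat.le_of_lt_succ i.2), extendWord_apply _ (Nat.le_of_lt_succ i.2)]
    at this

lemma eq_iUnion_cyl {n : ℕ} {B : Set (ℕ → M)} (hB : DependsOn (· ∈ B) (Set.Iic n)) :
    B = ⋃ v : {v : Fin (n + 1) → M // extendWord v ∈ B}, cyl (extendWord v.1) n := by
  ext ω
  simp only [Set.mem_iUnion, Subtype.exists, exists_prop]
  constructor
  · intro hω
    refine ⟨fun i => ω i, ?_, mem_cyl_extendWord ω⟩
    exact cast (hB fun i hi => mem_cyl_extendWord ω i hi) hω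
  · rintro ⟨v, hv, hω⟩
    exact cast (hB fun i hi => (hω i hi).symm) hv

lemma pairwise_disjoint_cyl_extendWord {n : ℕ} (B : Set (ℕ → M)) :
    Pairwise (Function.onFun Disjoint fun v : {v : Fin (n + 1) → M // extendWord v ∈ B} =>
      cyl (extendWord v.1) n) :=
  fun _ _ h => disjoint_cyl_extendWord (Subtype.coe_ne_coe.mpr h)

lemma dependsOn_mem_inter {B C : Set (ℕ → M)} {s : Set ℕ} (hB : DependsOn (· ∈ B) s)
    (hC : DependsOn (· ∈ C) s) : DependsOn (· ∈ B ∩ C) s := fun _ _ h =>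
  congrArg₂ And (hB h) (hC h)

lemma dependsOn_apply_eq (n : ℕ) (x : M) :
    DependsOn (· ∈ {ω : ℕ → M | ω n = x}) (Set.Iic n) :=
  fun ω ω' h => by simp [h n Set.self_mem_Iic]

lemma dependsOn_retTime_eq (z : M) (j n : ℕ) :
    DependsOn (· ∈ {ω : ℕ → M | retTime z j ω = n}) (Set.Iic n) := fun _ _ h =>
  propext ⟨retTime_eq_of_eqOn j h, retTime_eq_of_eqOn j fun i hi => (h i hi).symm⟩

lemma dependsOn_univ_inter_retTime_eq (z : M) (j n : ℕ) :
    DependsOn (· ∈ Set.univ ∩ {ω : ℕ → M | retTime z j ω = n}) (Set.Iic n) := by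
  simpa using dependsOn_retTime_eq z j n

lemma dependsOn_natCast_lt_coverTime (A : Set M) (n : ℕ) :
    DependsOn (· ∈ {ω : ℕ → M | (n : ℝ≥0∞) < coverTime A ω}) (Set.Iic n) := by
  intro _ _ h
  simp only [Set.mem_ofPred_eq, natCast_lt_coverTime_iff]
  refine propext (exists_congr fun x => and_congr_right fun _ => forall₂_congr fun i hi => ?_)
  rw [h i hi]

lemma dependsOn_retTime_lt_coverTime (A : Set M) (z : M) (j n : ℕ) :
    DependsOn
      (· ∈ {ω : ℕ → M | retTime z j ω < coverTime A ω} ∩ {ω | retTime z j ω = n})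
      (Set.Iic n) := by
  have : {ω : ℕ → M | retTime z j ω < coverTime A ω} ∩ {ω | retTime z j ω = n}
      = {ω | (n : ℝ≥0∞) < coverTime A ω} ∩ {ω | retTime z j ω = n} := by
    ext ω
    simp only [Set.mem_inter_iff, Set.mem_ofPred_eq]
    exact ⟨fun ⟨h, hn⟩ => ⟨hn ▸ h, hn⟩, fun ⟨h, hn⟩ => ⟨hn ▸ h, hn⟩⟩
  rw [this]
  exact dependsOn_mem_inter (dependsOn_natCast_lt_coverTime A n) (dependsOn_retTime_eq z j n)

lemma isPiSystem_cyl : IsPiSystem {S : Set (ℕ → M) | ∃ q n, S = cyl q n} := by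
  rintro _ ⟨q, n, rfl⟩ _ ⟨q', n', rfl⟩ ⟨ω, hω, hω'⟩
  rcases le_total n n' with h | h
  · refine ⟨q', n', Set.inter_eq_right.mpr (cyl_subset_cyl h fun i hi => ?_)⟩
    exact (hω' i (hi.trans h)).symm.trans (hω i hi)
  · refine ⟨q, n, Set.inter_eq_left.mpr (cyl_subset_cyl h fun i hi => ?_)⟩
    exact (hω i (hi.trans h)).symm.trans (hω' i hi)

lemma iUnion_cyl_zero : ⋃ y : M, cyl (fun _ => y) 0 = Set.univ :=
  Set.eq_univ_of_forall fun ω => Set.mem_iUnion.mpr ⟨ω 0, by simp [cyl_zero]⟩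

def splice (q q' : ℕ → M) (n : ℕ) : ℕ → M := fun i => if i ≤ n then q i else q' (i - n)

lemma splice_add {q q' : ℕ → M} {n : ℕ} (h : q' 0 = q n) (j : ℕ) :
    splice q q' n (n + j) = q' j := by
  rcases Nat.eq_zero_or_pos j with rfl | hj
  · simp [splice, h]
  · simp [splice, show ¬ n + j ≤ n by omega]

lemma cyl_inter_shift_preimage {q q' : ℕ → M} {n : ℕ} (h : q' 0 = q n) (m : ℕ) :
    cyl q n ∩ shift n ⁻¹' cyl q' m = cyl (splice q q' n) (n + m) := by
  ext ω
  simp only [cyl, Set.mem_inter_iff, Set.mem_preimage, shift_apply, Set.mem_ofPred_eq]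
  constructor
  · rintro ⟨hq, hq'⟩ i hi
    by_cases hin : i ≤ n
    · simpa [splice, hin] using hq i hin
    · obtain ⟨j, rfl⟩ := Nat.exists_eq_add_of_le (Nat.le_of_not_le hin)
      rw [splice_add h]
      exact hq' j (by omega)
  · intro hω
    refine ⟨fun i hi => by simpa [splice, hi] using hω i (by omega), fun j hj => ?_⟩
    rw [hω (n + j) (by omega), splice_add h]

end Cylinders

section MeasurableAtoms

variable {M : Type*} [MeasurableSpace M]

lemma mem_of_forall_mem_measurableAtom {T : Set (ℕ → M)} (hT : MeasurableSet T)
    {ω ω' : ℕ → M} (hω : ω ∈ T) (h : ∀ i, ω' i ∈ measurableAtom (ω i)) :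
    ω' ∈ T := by
  let Saturated : MeasurableSpace (ℕ → M) :=
    { MeasurableSet' := fun T => MeasurableSet T ∧
        ∀ ω ω', (∀ i, ω' i ∈ measurableAtom (ω i)) → ω ∈ T → ω' ∈ T
      measurableSet_empty := ⟨.empty, fun _ _ _ h => h⟩
      measurableSet_compl := fun T ⟨hT, hsat⟩ => ⟨hT.compl, fun ω ω' h hω hω' =>
        hω (hsat ω' ω (fun i => measurableAtom_eq_of_mem (h i) ▸ mem_measurableAtom_self _)
          hω')⟩
      measurableSet_iUnion := fun T hT => ⟨.iUnion fun i => (hT i).1, fun ω ω' h hω => by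
        obtain ⟨i, hi⟩ := Set.mem_iUnion.mp hω
        exact Set.mem_iUnion.mpr ⟨i, (hT i).2 ω ω' h hi⟩⟩ }
  have hle : (MeasurableSpace.pi : MeasurableSpace (ℕ → M)) ≤ Saturated := by
    refine iSup_le fun i => ?_
    rintro _ ⟨s, hs, rfl⟩
    exact ⟨measurable_pi_apply i hs, fun ω ω' h hω => mem_of_mem_measurableAtom (h i) hs hω⟩
  exact (hle T hT).2 ω ω' h hω

instance Chain.isProbabilityMeasure (c : Chain M) (x : M) : IsProbabilityMeasure (c.P x) :=
  c.prob x

variable (c : Chain M)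

lemma measure_cyl_succ (x : M) (q : ℕ → M) (n : ℕ) :
    c.P x (cyl q (n + 1)) = c.P x (cyl q n) * c.K (q n) (q (n + 1)) :=
  c.markov x q n

lemma measure_cyl_one {x : M} {q : ℕ → M} (hq : q 0 = x) : c.P x (cyl q 1) = c.K x (q 1) := by
  have := c.markov x q 0
  simp only [zero_add, Nat.le_zero, forall_eq, hq, c.start x, one_mul] at this
  exact this

lemma measure_measurableAtom_one_le (x w : M) :
    c.P x {ω | ω 0 ∈ measurableAtom x ∧ ω 1 ∈ measurableAtom w} ≤ c.K x w := by
  classical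
  set q : ℕ → M := fun i => if i = 0 then x else w
  refine le_trans ?_ (measure_cyl_one c (q := q) rfl).le
  rw [← measure_toMeasurable (cyl q 1)]
  refine measure_mono fun ω ⟨h0, h1⟩ => ?_
  refine mem_of_forall_mem_measurableAtom (measurableSet_toMeasurable _ _)
    (subset_toMeasurable _ _ (show (fun i => if i ≤ 1 then q i else ω i) ∈ cyl q 1 from
      fun i hi => if_pos hi)) fun i => ?_
  match i with
  | 0 => exact h0
  | 1 => exact h1
  | i + 2 => exact mem_measurableAtom_self _

variable [Countable M]

lemma measure_start_not_mem_measurableAtom (x : M) :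
    c.P x {ω | ω 0 ∉ measurableAtom x} = 0 := by
  have hmeas : MeasurableSet {ω : ℕ → M | ω 0 ∈ measurableAtom x} :=
    measurable_pi_apply 0 (.measurableAtom_of_countable x)
  refine (prob_compl_eq_zero_iff hmeas).mpr (le_antisymm prob_le_one ?_)
  exact (c.start x).symm.le.trans
    (measure_mono fun ω (hω : ω 0 = x) => hω ▸ mem_measurableAtom_self _)

lemma kernel_eq_zero_of_mem_measurableAtom {a b : M} (hab : b ∈ measurableAtom a) (hne : b ≠ a)
    (x : M) : c.K x a = 0 := by
  set Y : Set M := (measurableAtom a)ᶜ ∪ {b}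
  have hcover : (1 : ℝ≥0∞) ≤ ∑' y : Y, c.K x y := by
    calc (1 : ℝ≥0∞) = c.P x Set.univ := measure_univ.symm
      _ ≤ c.P x ({ω | ω 0 ∉ measurableAtom x} ∪
            ⋃ y : Y, {ω | ω 0 ∈ measurableAtom x ∧ ω 1 ∈ measurableAtom (y : M)}) := by
        refine measure_mono fun ω _ => ?_
        by_cases h0 : ω 0 ∈ measurableAtom x
        · refine Or.inr (Set.mem_iUnion.mpr ?_)
          by_cases h1 : ω 1 ∈ measurableAtom a
          · refine ⟨⟨b, Or.inr rfl⟩, h0, ?_⟩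
            rwa [measurableAtom_eq_of_mem hab]
          · exact ⟨⟨ω 1, Or.inl h1⟩, h0, mem_measurableAtom_self _⟩
        · exact Or.inl h0
      _ ≤ 0 + ∑' y : Y, c.K x y := by
        refine (measure_union_le _ _).trans (add_le_add
          (measure_start_not_mem_measurableAtom c x).le ?_)
        exact (measure_iUnion_le _).trans
          (ENNReal.tsum_le_tsum fun y => measure_measurableAtom_one_le c x y)
      _ = ∑' y : Y, c.K x y := zero_add _
  have ha : a ∈ Yᶜ := by simpa [Y] using hne.symm
  have htotal : ∑' y : Y, c.K x y + c.K x a ≤ 1 := by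
    rw [← c.K_row x, ← ENNReal.summable.tsum_add_tsum_compl (s := Y) ENNReal.summable]
    exact add_le_add_right (ENNReal.le_tsum (⟨a, ha⟩ : ↥Yᶜ)) _
  have hY : ∑' y : Y, c.K x y = 1 := le_antisymm (le_self_add.trans htotal) hcover
  rw [hY] at htotal
  exact le_antisymm ((ENNReal.add_le_add_iff_left ENNReal.one_ne_top).mp
    (htotal.trans (add_zero 1).symm.le)) bot_le

lemma measure_apply_succ_eq_zero {a : M} (hK : ∀ x, c.K x a = 0) (x : M) (n : ℕ) :
    c.P x {ω | ω (n + 1) = a} = 0 := by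
  rw [eq_iUnion_cyl (dependsOn_apply_eq (n + 1) a)]
  refine measure_iUnion_null fun v => ?_
  rw [measure_cyl_succ, show extendWord v.1 (n + 1) = a from v.2, hK, mul_zero]

/-- `Chain` only constrains `P x` on measurable sets of paths. If `b ≠ a` lay in the measurable
atom of `a`, no transition could be seen to enter `a`, and `a` would not be recurrent. -/
theorem measurableSingletonClass_of_positiveRecurrent (hpos : PositiveRecurrent c) :
    MeasurableSingletonClass M := by
  refine ⟨fun a => ?_⟩
  suffices measurableAtom a = {a} from this ▸ .measurableAtom_of_countable a
  refine Set.Subset.antisymm (fun b hab => by_contra fun hne => ?_) (by simp)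
  have hK := kernel_eq_zero_of_mem_measurableAtom c hab hne
  have hnull : c.P a (⋃ n, {ω | ω (n + 1) = a}) = 0 :=
    measure_iUnion_null (measure_apply_succ_eq_zero c hK a)
  have hnoreturn : ∀ᵐ ω ∂c.P a, retTime a 1 ω = ⊤ := by
    refine measure_mono_null (fun ω hω => ?_) hnull
    obtain ⟨i, hi, hia⟩ : ∃ i, 1 ≤ i ∧ ω i = a := by
      simpa [retTime_one_eq_top_iff] using hω
    obtain ⟨m, rfl⟩ := Nat.exists_eq_add_of_le' hi
    exact Set.mem_iUnion.mpr ⟨m, hia⟩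
  have htop : E c a (retTime a 1) = ⊤ := by
    refine top_le_iff.mp ((le_of_eq ?_).trans (lintegral_mono_ae (hnoreturn.mono fun ω h => h.ge)))
    simp
  exact (hpos a).ne htop

end MeasurableAtoms

section MarkovProperty

variable {M : Type*} [MeasurableSpace M] [Countable M] [MeasurableSingletonClass M]

lemma measurableSet_cyl (q : ℕ → M) (n : ℕ) : MeasurableSet (cyl q n) := by
  simp only [cyl, Set.ofPred_forall]
  exact .iInter fun i => .iInter fun _ => measurableSet_eq_fun (measurable_pi_apply i)
    measurable_const

lemma measurableSet_of_dependsOn {n : ℕ} {B : Set (ℕ → M)}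
    (hB : DependsOn (· ∈ B) (Set.Iic n)) : MeasurableSet B := by
  rw [eq_iUnion_cyl hB]
  exact .iUnion fun _ => measurableSet_cyl _ _

lemma pi_eq_generateFrom_cyl :
    (MeasurableSpace.pi : MeasurableSpace (ℕ → M)) =
      MeasurableSpace.generateFrom {S | ∃ q n, S = cyl q n} := by
  refine le_antisymm (iSup_le fun i => ?_) (MeasurableSpace.generateFrom_le ?_)
  · rintro _ ⟨s, -, rfl⟩
    have hB : DependsOn (· ∈ (fun ω : ℕ → M => ω i) ⁻¹' s) (Set.Iic i) :=
      fun ω ω' h => by simp [h i Set.self_mem_Iic]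
    rw [eq_iUnion_cyl hB]
    exact .iUnion fun v => MeasurableSpace.measurableSet_generateFrom ⟨_, i, rfl⟩
  · rintro _ ⟨q, n, rfl⟩
    exact measurableSet_cyl q n

lemma measure_ext_cyl {μ ν : Measure (ℕ → M)} [IsFiniteMeasure μ]
    (h : ∀ q n, μ (cyl q n) = ν (cyl q n)) : μ = ν := by
  have hdisj : Pairwise (Function.onFun Disjoint fun y : M => cyl (fun _ => y) 0) :=
    fun y y' hy => Set.disjoint_left.mpr fun ω h h' => hy ((h 0 le_rfl).symm.trans (h' 0 le_rfl))
  refine ext_of_generate_finite _ pi_eq_generateFrom_cyl isPiSystem_cyl ?_ ?_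
  · rintro _ ⟨q, n, rfl⟩
    exact h q n
  · rw [← iUnion_cyl_zero, measure_iUnion hdisj fun _ => measurableSet_cyl _ _,
      measure_iUnion hdisj fun _ => measurableSet_cyl _ _]
    exact tsum_congr fun y => h _ 0

variable (c : Chain M)

lemma ae_start (x : M) : ∀ᵐ ω ∂c.P x, ω 0 = x :=
  (prob_compl_eq_zero_iff (measurableSet_eq_fun (measurable_pi_apply 0) measurable_const)).mpr
    (c.start x)

lemma measure_start_ne {x y : M} (h : y ≠ x) : c.P x {ω | ω 0 = y} = 0 :=
  measure_mono_null (fun ω (hω : ω 0 = y) (hx : ω 0 = x) => h (hω ▸ hx))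
    (ae_iff.mp (ae_start c x))

lemma measure_cyl_inter_shift_preimage (x : M) (q : ℕ → M) (n : ℕ) (q' : ℕ → M)
    (m : ℕ) :
    c.P x (cyl q n ∩ shift n ⁻¹' cyl q' m) = c.P x (cyl q n) * c.P (q n) (cyl q' m) := by
  by_cases h : q' 0 = q n
  · induction m with
    | zero =>
      rw [cyl_inter_shift_preimage h, add_zero,
        cyl_congr (q' := q) fun i hi => by simp [splice, hi], cyl_zero, h, c.start, mul_one]
    | succ m ih =>
      calc c.P x (cyl q n ∩ shift n ⁻¹' cyl q' (m + 1))
          = c.P x (cyl (splice q q' n) (n + m + 1)) := by rw [cyl_inter_shift_preimage h]; rfl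
        _ = c.P x (cyl (splice q q' n) (n + m)) * c.K (q' m) (q' (m + 1)) := by
          rw [measure_cyl_succ, splice_add h, ← splice_add h (m + 1)]
          rfl
        _ = c.P x (cyl q n) * c.P (q n) (cyl q' (m + 1)) := by
          rw [← cyl_inter_shift_preimage h, ih, measure_cyl_succ, mul_assoc]
  · have hempty : cyl q n ∩ shift n ⁻¹' cyl q' m = ∅ :=
      Set.eq_empty_of_forall_notMem fun ω ⟨hq, hq'⟩ =>
        h ((hq' 0 (Nat.zero_le m)).symm.trans (by simpa using hq n le_rfl))
    have hnull : c.P (q n) (cyl q' m) = 0 :=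
      measure_mono_null (fun ω hω => hω 0 (Nat.zero_le m)) (measure_start_ne c h)
    rw [hempty, hnull, measure_empty, mul_zero]

lemma map_shift_restrict_cyl (x : M) (q : ℕ → M) (n : ℕ) :
    ((c.P x).restrict (cyl q n)).map (shift n) = c.P x (cyl q n) • c.P (q n) := by
  refine measure_ext_cyl fun q' m => ?_
  rw [Measure.map_apply (measurable_shift n) (measurableSet_cyl q' m),
    Measure.restrict_apply (measurable_shift n (measurableSet_cyl q' m)), Set.inter_comm,
    measure_cyl_inter_shift_preimage, Measure.smul_apply, smul_eq_mul]

theorem setLIntegral_comp_shift {x y : M} {n : ℕ} {B : Set (ℕ → M)}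
    (hB : DependsOn (· ∈ B) (Set.Iic n)) (hBy : ∀ ω ∈ B, ω n = y)
    {f : (ℕ → M) → ℝ≥0∞} (hf : Measurable f) :
    ∫⁻ ω in B, f (shift n ω) ∂c.P x = c.P x B * ∫⁻ ω, f ω ∂c.P y := by
  have hcyl := fun v : {v : Fin (n + 1) → M // extendWord v ∈ B} =>
    measurableSet_cyl (extendWord v.1) n
  have hdisj := pairwise_disjoint_cyl_extendWord (n := n) B
  rw [eq_iUnion_cyl hB, lintegral_iUnion hcyl hdisj, measure_iUnion hdisj hcyl,
    ← ENNReal.tsum_mul_right]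
  refine tsum_congr fun v => ?_
  rw [← lintegral_map hf (measurable_shift n), map_shift_restrict_cyl, lintegral_smul_measure,
    smul_eq_mul, hBy _ v.2]

theorem measure_inter_shift_preimage {x y : M} {n : ℕ} {B : Set (ℕ → M)}
    (hB : DependsOn (· ∈ B) (Set.Iic n)) (hBy : ∀ ω ∈ B, ω n = y)
    {S : Set (ℕ → M)} (hS : MeasurableSet S) :
    c.P x (B ∩ shift n ⁻¹' S) = c.P x B * c.P y S := by
  have h := setLIntegral_comp_shift c (x := x) hB hBy (measurable_const.indicator hS)
    (f := S.indicator 1)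
  rwa [lintegral_indicator_one hS, show (fun ω => S.indicator 1 (shift n ω))
      = (shift n ⁻¹' S).indicator (1 : (ℕ → M) → ℝ≥0∞) from rfl,
    lintegral_indicator_one (measurable_shift n hS), Measure.restrict_apply (measurable_shift n hS),
    Set.inter_comm] at h

end MarkovProperty

lemma measurable_firstTime {α : Type*} [MeasurableSpace α] {p : α → ℕ → Prop}
    (hp : ∀ n, MeasurableSet {a | p a n}) : Measurable fun a => firstTime (p a) := by
  classical
  simp_rw [firstTime_eq_iInf]
  exact .iInf fun n => Measurable.ite (hp n) measurable_const measurable_const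

section StrongMarkov

variable {M : Type*} [MeasurableSpace M] [Countable M] [MeasurableSingletonClass M]

lemma measurableSet_apply_eq (n : ℕ) (x : M) : MeasurableSet {ω : ℕ → M | ω n = x} :=
  measurableSet_eq_fun (measurable_pi_apply n) measurable_const

lemma measurable_hitTime (x : M) : Measurable (hitTime {x} : (ℕ → M) → ℝ≥0∞) :=
  measurable_firstTime fun n => measurableSet_apply_eq n x

lemma measurable_retTime (z : M) (k : ℕ) : Measurable (retTime z k) := by
  induction k with
  | zero => exact measurable_const
  | succ k ih =>
    exact measurable_firstTime fun n => (ih measurableSet_Iio).inter (measurableSet_apply_eq n z)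

lemma measurableSet_retTime_eq_top (z : M) (k : ℕ) :
    MeasurableSet {ω : ℕ → M | retTime z k ω = ⊤} :=
  measurable_retTime z k (measurableSet_singleton ⊤)

lemma measurable_coverTime (A : Set M) : Measurable (coverTime A) :=
  .biSup A A.to_countable fun x _ => measurable_hitTime x

variable (c : Chain M) {z : M} {j : ℕ}

lemma ae_apply_eq_of_retTime_eq (z : M) (j n : ℕ) :
    ∀ᵐ ω ∂c.P z, retTime z j ω = n → ω n = z := by
  rcases Nat.eq_zero_or_pos j with rfl | hj
  · filter_upwards [ae_start c z] with ω hω h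
    obtain rfl : n = 0 := by exact_mod_cast (show (0 : ℝ≥0∞) = n from h).symm
    exact hω
  · exact .of_forall fun ω => apply_eq_of_retTime_eq hj

/-- The strong Markov property at `T^j`; `hB` says that `B` is an event before `T^j`. -/
theorem setLIntegral_comp_shiftAt_retTime (hfin : c.P z {ω | retTime z j ω = ⊤} = 0)
    {B : Set (ℕ → M)}
    (hB : ∀ n : ℕ, DependsOn (· ∈ B ∩ {ω | retTime z j ω = n}) (Set.Iic n))
    {f : (ℕ → M) → ℝ≥0∞} (hf : Measurable f) :
    ∫⁻ ω in B, f (shiftAt (retTime z j) ω) ∂c.P z = c.P z B * ∫⁻ ω, f ω ∂c.P z := by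
  set F : ℕ → Set (ℕ → M) := fun n => B ∩ {ω | retTime z j ω = n} ∩ {ω | ω n = z}
  have hFdep (n : ℕ) : DependsOn (· ∈ F n) (Set.Iic n) :=
    dependsOn_mem_inter (hB n) (dependsOn_apply_eq n z)
  have hFm (n : ℕ) : MeasurableSet (F n) := measurableSet_of_dependsOn (hFdep n)
  have hdisj : Pairwise (Function.onFun Disjoint F) := fun n m hnm =>
    Set.disjoint_left.mpr fun ω hn hm => hnm (by exact_mod_cast hn.1.2.symm.trans hm.1.2)
  have hB_ae : (⋃ n, F n : Set (ℕ → M)) =ᵐ[c.P z] B := by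
    refine ae_eq_set.mpr ⟨by rw [Set.sdiff_eq_empty.mpr (Set.iUnion_subset fun n =>
      Set.inter_subset_left.trans Set.inter_subset_left), measure_empty], ?_⟩
    have hend := ae_all_iff.mpr fun n => ae_apply_eq_of_retTime_eq c z j n
    refine measure_mono_null (fun ω ⟨hωB, hωF⟩ => ?_)
      (measure_union_null hfin (ae_iff.mp hend))
    obtain ⟨n, hn⟩ | htop := retTime_eq_natCast_or_top z j ω
    · exact Or.inr fun h => hωF (Set.mem_iUnion.mpr ⟨n, ⟨hωB, hn⟩, h n hn⟩)
    · exact Or.inl htop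
  rw [← setLIntegral_congr hB_ae, ← measure_congr hB_ae, lintegral_iUnion hFm hdisj,
    measure_iUnion hdisj hFm, ← ENNReal.tsum_mul_right]
  refine tsum_congr fun n => ?_
  rw [setLIntegral_congr_fun (hFm n) fun ω hω => by rw [shiftAt_of_eq hω.1.2]]
  exact setLIntegral_comp_shift c (hFdep n) (fun ω hω => hω.2) hf

theorem measure_inter_shiftAt_retTime_preimage (hfin : c.P z {ω | retTime z j ω = ⊤} = 0)
    {B : Set (ℕ → M)}
    (hB : ∀ n : ℕ, DependsOn (· ∈ B ∩ {ω | retTime z j ω = n}) (Set.Iic n))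
    {S : Set (ℕ → M)} (hS : MeasurableSet S) :
    c.P z (B ∩ shiftAt (retTime z j) ⁻¹' S) = c.P z B * c.P z S := by
  have h := setLIntegral_comp_shiftAt_retTime c hfin hB (measurable_const.indicator hS)
    (f := S.indicator 1)
  have hθS := measurable_shiftAt (measurable_retTime z j) hS
  rwa [lintegral_indicator_one hS, show (fun ω => S.indicator 1 (shiftAt (retTime z j) ω))
      = (shiftAt (retTime z j) ⁻¹' S).indicator (1 : (ℕ → M) → ℝ≥0∞) from rfl,
    lintegral_indicator_one hθS, Measure.restrict_apply hθS, Set.inter_comm] at h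

lemma measure_retTime_eq_top (hpos : PositiveRecurrent c) (z : M) (j : ℕ) :
    c.P z {ω | retTime z j ω = ⊤} = 0 := by
  have hone : c.P z {ω | retTime z 1 ω = ⊤} = 0 := by
    simpa [ae_iff, lt_top_iff_ne_top] using ae_lt_top (measurable_retTime z 1) (hpos z).ne
  induction j with
  | zero => simp [retTime]
  | succ j ih =>
    have hshift := measure_inter_shiftAt_retTime_preimage c ih
      (dependsOn_univ_inter_retTime_eq z j) (measurableSet_retTime_eq_top z 1)
    rw [hone, mul_zero] at hshift
    refine measure_mono_null (fun ω (hω : retTime z (j + 1) ω = ⊤) => ?_)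
      (measure_union_null ih hshift)
    rw [retTime_add, ENNReal.add_eq_top] at hω
    exact hω.imp id fun h => ⟨trivial, h⟩

lemma E_retTime_eq_mul (hpos : PositiveRecurrent c) (z : M) (j : ℕ) :
    E c z (retTime z j) = j * E c z (retTime z 1) := by
  induction j with
  | zero => simp [E, retTime]
  | succ j ih =>
    have hshift := setLIntegral_comp_shiftAt_retTime c (measure_retTime_eq_top c hpos z j)
      (dependsOn_univ_inter_retTime_eq z j) (measurable_retTime z 1)
    rw [Measure.restrict_univ, measure_univ, one_mul] at hshift
    simp only [E] at ih ⊢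
    simp_rw [retTime_add z j 1]
    rw [lintegral_add_left (measurable_retTime z j), ih, hshift]
    push_cast
    ring

end StrongMarkov

lemma tsum_natCast_lt_eq {t : ℝ≥0∞} (ht : (∃ m : ℕ, t = m) ∨ t = ⊤) :
    ∑' n : ℕ, {n : ℕ | (n : ℝ≥0∞) < t}.indicator 1 n = t := by
  rcases ht with ⟨m, rfl⟩ | rfl
  · rw [tsum_eq_sum (s := Finset.range m) fun n hn => by simpa using hn]
    simp only [Set.indicator_apply, Set.mem_ofPred_eq, Nat.cast_lt, Pi.one_apply,
      Finset.sum_boole]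
    rw [Finset.filter_true_of_mem fun x hx => Finset.mem_range.mp hx, Finset.card_range]
  · simp [ENNReal.tsum_const_eq_top_of_ne_zero one_ne_zero]

lemma lintegral_eq_tsum_measure_natCast_lt {α : Type*} [MeasurableSpace α] (μ : Measure α)
    {f : α → ℝ≥0∞} (hf : Measurable f)
    (hval : ∀ a, (∃ n : ℕ, f a = n) ∨ f a = ⊤) :
    ∫⁻ a, f a ∂μ = ∑' n : ℕ, μ {a | (n : ℝ≥0∞) < f a} := by
  have hmeas (n : ℕ) : MeasurableSet {a | (n : ℝ≥0∞) < f a} := hf measurableSet_Ioi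
  calc ∫⁻ a, f a ∂μ
      = ∫⁻ a, ∑' n : ℕ, {a | (n : ℝ≥0∞) < f a}.indicator 1 a ∂μ := by
        congr with a
        rw [← tsum_natCast_lt_eq (hval a)]
        rfl
    _ = ∑' n : ℕ, μ {a | (n : ℝ≥0∞) < f a} := by
        rw [lintegral_tsum fun n => (measurable_one.indicator (hmeas n)).aemeasurable]
        exact tsum_congr fun n => lintegral_indicator_one (hmeas n)

section PathMeasure

variable {M : Type*} [MeasurableSpace M] (c : Chain M)

def pathMeasure (π : M → ℝ≥0∞) : Measure (ℕ → M) := Measure.sum fun x => π x • c.P x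

lemma pathMeasure_apply (π : M → ℝ≥0∞) {S : Set (ℕ → M)} (hS : MeasurableSet S) :
    pathMeasure c π S = ∑' x, π x * c.P x S := by
  simp [pathMeasure, Measure.sum_apply _ hS]

lemma isProbabilityMeasure_pathMeasure {π : M → ℝ≥0∞} (hπ : Invariant c π) :
    IsProbabilityMeasure (pathMeasure c π) :=
  ⟨by simp [pathMeasure_apply c π .univ, hπ.1]⟩

end PathMeasure

section Kac

variable {M : Type*} [MeasurableSpace M] [Countable M] [MeasurableSingletonClass M]
  (c : Chain M)

/-- If `P_x` missed `z` forever with positive probability, so would `P_z` after reaching `x`. -/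
lemma measure_retTime_one_eq_top (hpos : PositiveRecurrent c) (hirr : Irreducible c)
    (x z : M) : c.P x {ω | retTime z 1 ω = ⊤} = 0 := by
  obtain ⟨n, hn⟩ := hirr z x
  have hsplit := measure_inter_shift_preimage c (x := z) (dependsOn_apply_eq n x) (fun _ h => h)
    (measurableSet_retTime_eq_top z 1)
  have hnull : c.P z ({ω | ω n = x} ∩ shift n ⁻¹' {ω | retTime z 1 ω = ⊤}) = 0 := by
    refine measure_mono_null (fun ω hω => ?_) (measure_retTime_eq_top c hpos z (n + 1))
    obtain ⟨m, hm⟩ | htop := retTime_eq_natCast_or_top z (n + 1) ω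
    · have hnm : n + 1 ≤ m := by exact_mod_cast hm ▸ natCast_le_retTime z (n + 1) ω
      refine absurd (retTime_one_eq_top_iff.mp hω.2 (m - n) (by omega)) ?_
      simpa [show n + (m - n) = m by omega] using apply_eq_of_retTime_eq (by omega) hm
    · exact htop
  rw [hsplit] at hnull
  exact (mul_eq_zero.mp hnull).resolve_left hn.ne'

lemma measure_apply_one (x y : M) : c.P x {ω | ω 1 = y} = c.K x y :=
  calc c.P x {ω | ω 1 = y} = c.P x ({ω | ω 1 = y} ∩ {ω | ω 0 = x}) :=
        (measure_inter_conull (ae_start c x)).symm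
    _ = c.P x (cyl (fun i => if i = 0 then x else y) 1) := by
        congr 1
        ext ω
        simp only [cyl, Nat.le_one_iff_eq_zero_or_eq_one]
        grind
    _ = c.K x y := measure_cyl_one c rfl

lemma map_shift_one_pathMeasure {π : M → ℝ≥0∞} (hπ : Invariant c π) :
    (pathMeasure c π).map (shift 1) = pathMeasure c π := by
  ext S hS
  have hdisj : Pairwise (Function.onFun Disjoint
      fun y : M => {ω : ℕ → M | ω 1 = y} ∩ shift 1 ⁻¹' S) :=
    fun y y' hy => Set.disjoint_left.mpr fun ω h h' => hy (h.1.symm.trans h'.1)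
  have hsplit (x : M) : c.P x (shift 1 ⁻¹' S) = ∑' y, c.K x y * c.P y S := by
    simp_rw [← measure_apply_one,
      ← measure_inter_shift_preimage c (dependsOn_apply_eq 1 _) (fun _ h => h) hS]
    rw [← measure_iUnion hdisj fun y => (measurableSet_apply_eq 1 y).inter
      (measurable_shift 1 hS), ← Set.iUnion_inter,
      Set.iUnion_eq_univ_iff.mpr fun ω => ⟨ω 1, rfl⟩,
      Set.univ_inter]
  rw [Measure.map_apply (measurable_shift 1) hS, pathMeasure_apply c π (measurable_shift 1 hS),
    pathMeasure_apply c π hS]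
  simp_rw [hsplit, ← ENNReal.tsum_mul_left, ← mul_assoc]
  rw [ENNReal.tsum_comm]
  simp_rw [ENNReal.tsum_mul_right, hπ.2]

lemma pathMeasure_natCast_lt_retTime_one {π : M → ℝ≥0∞} (hπ : Invariant c π) (z : M)
    (N : ℕ) :
    pathMeasure c π {ω | (N : ℝ≥0∞) < retTime z 1 ω}
      = π z * c.P z {ω | (N : ℝ≥0∞) < retTime z 1 ω}
        + pathMeasure c π {ω | ((N + 1 : ℕ) : ℝ≥0∞) < retTime z 1 ω} := by
  set μ := pathMeasure c π
  have hB : MeasurableSet {ω : ℕ → M | (N : ℝ≥0∞) < retTime z 1 ω} :=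
    measurable_retTime z 1 measurableSet_Ioi
  rw [← measure_inter_add_sdiff _ (measurableSet_apply_eq 0 z)]
  congr 1
  · rw [pathMeasure_apply c π (hB.inter (measurableSet_apply_eq 0 z)), tsum_eq_single z
      fun x hx => by rw [measure_mono_null Set.inter_subset_right (measure_start_ne c hx.symm),
        mul_zero], measure_inter_conull (ae_start c z)]
  · have hD : MeasurableSet {ω : ℕ → M | (N : ℝ≥0∞) < hitTime {z} ω} :=
      measurable_hitTime z measurableSet_Ioi
    calc μ ({ω | (N : ℝ≥0∞) < retTime z 1 ω} \ {ω | ω 0 = z})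
        = μ {ω | (N : ℝ≥0∞) < hitTime {z} ω} := by
          congr 1
          ext ω
          simp only [Set.mem_sdiff, Set.mem_ofPred_eq, natCast_lt_retTime_one_iff,
            natCast_lt_hitTime_iff]
          constructor
          · rintro ⟨h, h0⟩ (_ | i) hi
            exacts [h0, h _ (by omega) hi]
          · exact fun h => ⟨fun i _ hi => h i hi, h 0 (Nat.zero_le N)⟩
      _ = μ (shift 1 ⁻¹' {ω | (N : ℝ≥0∞) < hitTime {z} ω}) := by
          rw [← Measure.map_apply (measurable_shift 1) hD, map_shift_one_pathMeasure c hπ]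
      _ = μ {ω | ((N + 1 : ℕ) : ℝ≥0∞) < retTime z 1 ω} := by
          congr 1
          ext ω
          simp only [Set.mem_preimage, Set.mem_ofPred_eq, natCast_lt_retTime_one_iff,
            natCast_lt_hitTime_iff, shift_apply]
          constructor
          · intro h i h1 hi
            obtain ⟨j, rfl⟩ := Nat.exists_eq_add_of_le h1
            exact h j (by omega)
          · exact fun h i hi => h (1 + i) (by omega) (by omega)

lemma sum_add_pathMeasure_natCast_lt_retTime_one {π : M → ℝ≥0∞} (hπ : Invariant c π)
    (z : M) (N : ℕ) :
    ∑ n ∈ Finset.range N, π z * c.P z {ω | (n : ℝ≥0∞) < retTime z 1 ω}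
      + pathMeasure c π {ω | (N : ℝ≥0∞) < retTime z 1 ω} = 1 := by
  have := isProbabilityMeasure_pathMeasure c hπ
  induction N with
  | zero =>
    have hB0 : {ω : ℕ → M | 0 < retTime z 1 ω} = Set.univ :=
      Set.eq_univ_of_forall fun ω => zero_lt_one.trans_le (by
        simpa using natCast_le_retTime z 1 ω)
    simp [hB0]
  | succ N ih =>
    rw [Finset.sum_range_succ, add_assoc, ← pathMeasure_natCast_lt_retTime_one c hπ, ih]

lemma iInf_pathMeasure_natCast_lt_retTime_one (hpos : PositiveRecurrent c) (hirr : Irreducible c)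
    {π : M → ℝ≥0∞} (hπ : Invariant c π) (z : M) :
    ⨅ N : ℕ, pathMeasure c π {ω | (N : ℝ≥0∞) < retTime z 1 ω} = 0 := by
  have := isProbabilityMeasure_pathMeasure c hπ
  have hanti : Antitone fun N : ℕ => {ω : ℕ → M | (N : ℝ≥0∞) < retTime z 1 ω} :=
    fun N N' h ω (hω : (N' : ℝ≥0∞) < _) =>
      show (N : ℝ≥0∞) < _ from (Nat.cast_le.mpr h).trans_lt hω
  rw [← hanti.measure_iInter
    (fun N => (measurable_retTime z 1 measurableSet_Ioi).nullMeasurableSet)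
    ⟨0, measure_ne_top _ _⟩]
  have hnull : pathMeasure c π {ω | retTime z 1 ω = ⊤} = 0 := by
    rw [pathMeasure_apply c π (measurableSet_retTime_eq_top z 1)]
    simp [measure_retTime_one_eq_top c hpos hirr]
  refine measure_mono_null (fun ω hω => ?_) hnull
  obtain ⟨m, hm⟩ | htop := retTime_eq_natCast_or_top z 1 ω
  · exact absurd hm (Set.mem_iInter.mp hω m).ne'
  · exact htop

/-- With `μ = pathMeasure c π`, `Σ_{n < N} π(z) P_z(T^1 > n) = 1 - μ(T^1 > N)` by telescoping,
and `μ(T^1 > N)` decreases to `μ(T^1 = ∞) = 0`. -/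
theorem kac (hpos : PositiveRecurrent c) (hirr : Irreducible c) {π : M → ℝ≥0∞}
    (hπ : Invariant c π) (z : M) : π z * E c z (retTime z 1) = 1 := by
  have := isProbabilityMeasure_pathMeasure c hπ
  rw [E, lintegral_eq_tsum_measure_natCast_lt _ (measurable_retTime z 1)
    (retTime_eq_natCast_or_top z 1), ← ENNReal.tsum_mul_left, ENNReal.tsum_eq_iSup_nat]
  calc ⨆ N, ∑ n ∈ Finset.range N, π z * c.P z {ω | (n : ℝ≥0∞) < retTime z 1 ω}
      = ⨆ N : ℕ, (1 - pathMeasure c π {ω | (N : ℝ≥0∞) < retTime z 1 ω}) :=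
        iSup_congr fun N => ENNReal.eq_sub_of_add_eq (measure_ne_top _ _)
          (sum_add_pathMeasure_natCast_lt_retTime_one c hπ z N)
    _ = 1 := by
        rw [← ENNReal.sub_iInf, iInf_pathMeasure_natCast_lt_retTime_one c hpos hirr hπ z,
          tsub_zero]

end Kac

section Blocks

variable {M : Type*} [MeasurableSpace M] [Countable M] [MeasurableSingletonClass M]
  (c : Chain M)

lemma measurableSet_retTime_lt_coverTime (A : Set M) (z : M) (j : ℕ) :
    MeasurableSet {ω : ℕ → M | retTime z j ω < coverTime A ω} :=
  measurableSet_lt (measurable_retTime z j) (measurable_coverTime A)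

/-- Still uncovered after `m + 1` blocks means uncovered after `m` blocks and then a fresh
block, distributed as the first one, that does not cover `A` on its own. -/
lemma measure_retTime_lt_coverTime_succ_mul_le (hpos : PositiveRecurrent c) (A : Set M)
    (z : M) (k m : ℕ) :
    c.P z {ω | retTime z ((m + 1) * k) ω < coverTime A ω}
      ≤ c.P z {ω | retTime z (m * k) ω < coverTime A ω}
        * c.P z {ω | retTime z k ω < coverTime A ω} := by
  rw [← measure_inter_shiftAt_retTime_preimage c (measure_retTime_eq_top c hpos z (m * k))
    (dependsOn_retTime_lt_coverTime A z (m * k)) (measurableSet_retTime_lt_coverTime A z k)]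
  refine measure_mono fun ω (hω : retTime z ((m + 1) * k) ω < coverTime A ω) => ?_
  rw [Nat.succ_mul, retTime_add] at hω
  have hm : retTime z (m * k) ω < coverTime A ω := le_self_add.trans_lt hω
  obtain ⟨a, ha⟩ := (retTime_eq_natCast_or_top z (m * k) ω).resolve_right (ne_top_of_lt hm)
  refine ⟨hm, ?_⟩
  change retTime z k (shiftAt _ ω) < coverTime A (shiftAt _ ω)
  rw [shiftAt_of_eq ha] at hω ⊢
  rw [ha] at hω
  by_contra! hle
  exact ((coverTime_le_add_shift A ω a).trans (add_le_add le_rfl hle)).not_gt hω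

lemma measure_retTime_lt_coverTime_mul_le_pow (hpos : PositiveRecurrent c) (A : Set M)
    (z : M) (k m : ℕ) :
    c.P z {ω | retTime z (m * k) ω < coverTime A ω}
      ≤ c.P z {ω | retTime z k ω < coverTime A ω} ^ m := by
  induction m with
  | zero => simpa using prob_le_one
  | succ m ih =>
    rw [pow_succ]
    exact (measure_retTime_lt_coverTime_succ_mul_le c hpos A z k m).trans (mul_le_mul_left ih _)

theorem E_coverTime_le_div (hpos : PositiveRecurrent c) (A : Set M) (z : M) {k : ℕ}
    (hk : 1 ≤ k) :
    E c z (coverTime A)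
      ≤ E c z (retTime z k) / c.P z {ω | coverTime A ω ≤ retTime z k ω} := by
  have hcompl : 1 - c.P z {ω | retTime z k ω < coverTime A ω}
      = c.P z {ω | coverTime A ω ≤ retTime z k ω} := by
    rw [show {ω | retTime z k ω < coverTime A ω} = {ω | coverTime A ω ≤ retTime z k ω}ᶜ by
        ext; simp, prob_compl_eq_one_sub (measurableSet_le (measurable_coverTime A)
        (measurable_retTime z k)), ENNReal.sub_sub_cancel ENNReal.one_ne_top prob_le_one]
  calc E c z (coverTime A)
      ≤ ∫⁻ ω, ∑' m : ℕ, {ω | retTime z (m * k) ω < coverTime A ω}.indicator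
          (fun ω => retTime z k (shiftAt (retTime z (m * k)) ω)) ω ∂c.P z :=
        lintegral_mono (coverTime_le_tsum_blocks hk A z)
    _ = ∑' m : ℕ, c.P z {ω | retTime z (m * k) ω < coverTime A ω} * E c z (retTime z k) := by
        have hblock (m : ℕ) : Measurable ({ω | retTime z (m * k) ω < coverTime A ω}.indicator
            fun ω => retTime z k (shiftAt (retTime z (m * k)) ω)) :=
          ((measurable_retTime z k).comp (measurable_shiftAt (measurable_retTime z _))).indicator
            (measurableSet_retTime_lt_coverTime A z _)
        rw [lintegral_tsum fun m => (hblock m).aemeasurable]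
        refine tsum_congr fun m => ?_
        rw [lintegral_indicator (measurableSet_retTime_lt_coverTime A z _),
          setLIntegral_comp_shiftAt_retTime c (measure_retTime_eq_top c hpos z _)
            (dependsOn_retTime_lt_coverTime A z _) (measurable_retTime z k)]
        rfl
    _ ≤ ∑' m : ℕ, c.P z {ω | retTime z k ω < coverTime A ω} ^ m * E c z (retTime z k) :=
        ENNReal.tsum_le_tsum fun m =>
          mul_le_mul_left (measure_retTime_lt_coverTime_mul_le_pow c hpos A z k m) _
    _ = E c z (retTime z k) / c.P z {ω | coverTime A ω ≤ retTime z k ω} := by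
        rw [ENNReal.tsum_mul_right, ENNReal.tsum_geometric, hcompl, div_eq_mul_inv, mul_comm]

end Blocks

theorem bdnp_lemma_general {M : Type*} [Countable M] [MeasurableSpace M]
    (c : Chain M) (hirr : Irreducible c) (hpos : PositiveRecurrent c)
    (π : M → ℝ≥0∞) (hπ : Invariant c π)
    {A : Set M} {z : M} {k : ℕ} (hk : 1 ≤ k) :
    E c z (coverTime A)
        ≤ E c z (retTime z k) / c.P z {ω | coverTime A ω ≤ retTime z k ω} ∧
    E c z (retTime z k) / c.P z {ω | coverTime A ω ≤ retTime z k ω}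
        = (k : ℝ≥0∞) / (π z * c.P z {ω | coverTime A ω ≤ retTime z k ω}) := by
  have := measurableSingletonClass_of_positiveRecurrent c hpos
  refine ⟨E_coverTime_le_div c hpos A z hk, ?_⟩
  have hkac : E c z (retTime z 1) * π z = 1 := mul_comm (π z) _ ▸ kac c hpos hirr hπ z
  have hπz : π z ≠ 0 := right_ne_zero_of_mul_eq_one hkac
  have hπtop : π z ≠ ⊤ := ne_top_of_le_ne_top one_ne_top (hπ.1 ▸ ENNReal.le_tsum z)
  rw [E_retTime_eq_mul c hpos z k, ENNReal.eq_inv_of_mul_eq_one_left hkac,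
    div_eq_mul_inv, div_eq_mul_inv, ENNReal.mul_inv (Or.inl hπz) (Or.inl hπtop), mul_assoc]

/-- Barlow–Ding–Nachmias–Peres lemma. For a finite `A ⊆ M`, `z ∈ A` and
`k ≥ 1`, `E_z T_cov(A) ≤ E_z T^k(z) / P_z(T_cov(A) ≤ T^k(z))
= k / (π(z) P_z(T_cov(A) ≤ T^k(z)))`. -/
theorem bdnp_lemma {M : Type*} [Countable M] [MeasurableSpace M]
    (c : Chain M) (hirr : Irreducible c) (hpos : PositiveRecurrent c)
    (π : M → ℝ≥0∞) (hπ : Invariant c π)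
    {A : Set M} (hA : A.Finite) {z : M} (hz : z ∈ A) {k : ℕ} (hk : 1 ≤ k) :
    E c z (coverTime A)
        ≤ E c z (retTime z k) / c.P z {ω | coverTime A ω ≤ retTime z k ω} ∧
    E c z (retTime z k) / c.P z {ω | coverTime A ω ≤ retTime z k ω}
        = (k : ℝ≥0∞) / (π z * c.P z {ω | coverTime A ω ≤ retTime z k ω}) :=
  bdnp_lemma_general c hirr hpos π hπ hk

end

end CoverTime
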